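/- Let A be a quiver algebra as above, v a class with θ(v) = 0, λ with λ([S_i]) > 0 for all i, and ξ ∈ R. An object E ∈ D^b_fin(A) of class v is σ_{θ,λ,ξ}-semistable of phase in (0,1] if and only if E is an A-module (i.e., lies in the heart) and θ(F) ≥ 0 for every nonzero proper submodule F ⊆ E; likewise for stable with strict inequality. In other words, Bridgeland (semi)stability for σ_{θ,λ,ξ} of objects of class v coincides with King θ-(semi)stability of A-modules of dimension vector v. -/

import Mathlib

/-!
On the upper half-plane `arg` is a decreasing function of `re / im`, so for `im z, im w > 0`
comparing `arg z` with `arg w` is comparing the cross products `re w * im z` and `re z * im w`.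
For `Z(w) = θ(w) + (i + ξ) λ(w)` the shear by `ξ` cancels from these cross products, and since
`θ(v) = 0` the comparison of `Z(N)` with `Z(v)` reduces to the sign of `θ(N) λ(v)`, i.e. of `θ(N)`.
-/

open Real

namespace Complex

theorem arg_ofReal_add_I (t : ℝ) : arg (t + I) = π / 2 - Real.arctan t := by
  have him : 0 < ((t : ℂ) + I).im := by simp
  rw [arg_of_im_pos him, arccos_eq_pi_div_two_sub_arcsin, Real.arctan_eq_arcsin]
  have hnorm : ‖(t : ℂ) + I‖ = √(1 + t ^ 2) := by
    simpa [add_comm] using norm_add_mul_I t 1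
  simp [hnorm]

theorem arg_eq_pi_div_two_sub_arctan {z : ℂ} (hz : 0 < z.im) :
    arg z = π / 2 - Real.arctan (z.re / z.im) := by
  have hz' : z = z.im * ((z.re / z.im : ℝ) + I) := by
    apply Complex.ext <;> simp [mul_div_cancel₀ _ hz.ne']
  conv_lhs => rw [hz']
  rw [arg_real_mul _ hz, arg_ofReal_add_I]

theorem arg_le_arg_iff_of_im_pos {z w : ℂ} (hz : 0 < z.im) (hw : 0 < w.im) :
    arg z ≤ arg w ↔ w.re * z.im ≤ z.re * w.im := by
  rw [arg_eq_pi_div_two_sub_arctan hz, arg_eq_pi_div_two_sub_arctan hw, sub_le_sub_iff_left,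
    arctan_strictMono.le_iff_le, div_le_div_iff₀ hw hz]

theorem arg_lt_arg_iff_of_im_pos {z w : ℂ} (hz : 0 < z.im) (hw : 0 < w.im) :
    arg z < arg w ↔ w.re * z.im < z.re * w.im := by
  rw [arg_eq_pi_div_two_sub_arctan hz, arg_eq_pi_div_two_sub_arctan hw, sub_lt_sub_iff_left,
    arctan_strictMono.lt_iff_lt, div_lt_div_iff₀ hw hz]

end Complex

section CentralCharge

variable {θ₁ θ₂ l₁ l₂ : ℝ} (ξ : ℝ)

theorem arg_charge_le_arg_charge_iff (hl₁ : 0 < l₁) (hl₂ : 0 < l₂) :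
    Complex.arg (θ₁ + (Complex.I + ξ) * l₁) ≤ Complex.arg (θ₂ + (Complex.I + ξ) * l₂) ↔
      θ₂ * l₁ ≤ θ₁ * l₂ := by
  rw [Complex.arg_le_arg_iff_of_im_pos (by simpa using hl₁) (by simpa using hl₂)]
  simp only [Complex.add_re, Complex.add_im, Complex.mul_re, Complex.mul_im, Complex.ofReal_re,
    Complex.ofReal_im, Complex.I_re, Complex.I_im]
  constructor <;> intro h <;> linarith

theorem arg_charge_lt_arg_charge_iff (hl₁ : 0 < l₁) (hl₂ : 0 < l₂) :
    Complex.arg (θ₁ + (Complex.I + ξ) * l₁) < Complex.arg (θ₂ + (Complex.I + ξ) * l₂) ↔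
      θ₂ * l₁ < θ₁ * l₂ := by
  rw [Complex.arg_lt_arg_iff_of_im_pos (by simpa using hl₁) (by simpa using hl₂)]
  simp only [Complex.add_re, Complex.add_im, Complex.mul_re, Complex.mul_im, Complex.ofReal_re,
    Complex.ofReal_im, Complex.I_re, Complex.I_im]
  constructor <;> intro h <;> linarith

end CentralCharge

/-- Lemma `lem:thetavsbridgeland`.  Let `A` be a quiver algebra, `v` a
class with `θ(v) = 0`, `λ` positive on classes of nonzero modules, and `ξ ∈ ℝ`.  An
object `E` of `D^b_fin(A)` of class `v` is `σ_{θ,λ,ξ}`-(semi)stable of phase in `(0,1]`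
iff `E` lies in the heart (i.e. is an `A`-module) and `θ(F) ≥ 0` (resp. `> 0`) for every
nonzero proper submodule `F ⊆ E`.

We model `E` by an actual module `M` over the algebra `A` (so that membership in the
heart is built in), with a dimension-vector function `cls` on its submodules; Bridgeland
(semi)stability of `E` of phase in `(0,1]` means that the phase of `Z(cls N)` — measured
by `Complex.arg`, which is an increasing reparametrisation of the phase on the
semi-closed upper half-plane — is at most (resp. strictly less than) the phase of
`Z(cls ⊤)` for every nonzero proper submodule `N`. -/
theorem bridgeland_semistable_iff_king_semistable
    (Q0 : Type*) [Fintype Q0]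
    (A : Type*) [Ring A]
    (M : Type*) [AddCommGroup M] [Module A M]        -- the object `E`, an `A`-module
    (cls : Submodule A M → Q0 → ℕ)                   -- dimension vectors of submodules
    (θ lam : Q0 → ℝ) (ξ : ℝ)
    (v : Q0 → ℕ)
    (hv : cls ⊤ = v)                                 -- `E` has class `v`
    (hθv : ∑ i, (v i : ℝ) * θ i = 0)                 -- `θ(v) = 0`
    (hlam : ∀ N : Submodule A M, N ≠ ⊥ → 0 < ∑ i, (cls N i : ℝ) * lam i)
    (Z : (Q0 → ℕ) → ℂ)
    (hZ : ∀ w, Z w = ((∑ i, (w i : ℝ) * θ i : ℝ) : ℂ)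
      + (Complex.I + (ξ : ℂ)) * ((∑ i, (w i : ℝ) * lam i : ℝ) : ℂ)) :
    -- semistable ↔ θ-semistable
    ((∀ N : Submodule A M, N ≠ ⊥ → N ≠ ⊤ →
        Complex.arg (Z (cls N)) ≤ Complex.arg (Z (cls ⊤)))
      ↔ (∀ N : Submodule A M, N ≠ ⊥ → N ≠ ⊤ → 0 ≤ ∑ i, (cls N i : ℝ) * θ i)) ∧
    -- stable ↔ θ-stable
    ((∀ N : Submodule A M, N ≠ ⊥ → N ≠ ⊤ →
        Complex.arg (Z (cls N)) < Complex.arg (Z (cls ⊤)))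
      ↔ (∀ N : Submodule A M, N ≠ ⊥ → N ≠ ⊤ → 0 < ∑ i, (cls N i : ℝ) * θ i)) := by
  have hθtop : ∑ i, (cls ⊤ i : ℝ) * θ i = 0 := hv ▸ hθv
  have hlamtop (N : Submodule A M) (hN : N ≠ ⊥) : 0 < ∑ i, (cls ⊤ i : ℝ) * lam i :=
    hlam ⊤ (ne_bot_of_le_ne_bot hN le_top)
  constructor
  · refine forall_congr' fun N => forall_congr' fun hN => forall_congr' fun _ => ?_
    rw [hZ, hZ, hθtop, arg_charge_le_arg_charge_iff ξ (hlam N hN) (hlamtop N hN), zero_mul,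
      mul_nonneg_iff_of_pos_right (hlamtop N hN)]
  · refine forall_congr' fun N => forall_congr' fun hN => forall_congr' fun _ => ?_
    rw [hZ, hZ, hθtop, arg_charge_lt_arg_charge_iff ξ (hlam N hN) (hlamtop N hN), zero_mul,
      mul_pos_iff_of_pos_right (hlamtop N hN)]
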